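/- arXiv:2207.11977 — 2 statements merged into one kernel-verified Lean document; each statement's English description precedes it below -/
import Mathlib

section
/- Let M ∈ ℝ^{n×n}, B ∈ ℝ^{n×m}, S ∈ ℝ^{n×n} symmetric positive semidefinite, and P ∈ ℝ^{n×n} symmetric positive definite satisfying the algebraic Riccati inequality Mᵀ P + P M + P B Bᵀ P + S ≺ 0. Then for every e ∈ ℝⁿ with e ≠ 0 and every w ∈ ℝ^m with ‖w‖² ≤ eᵀ S e, it holds that 2 eᵀ P (M e + B w) < 0. -/
open Matrix

section Riccati

variable {n m : Type*} [Fintype n] [Fintype m]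

lemma two_mul_dotProduct_le_dotProduct_self_add (v w : m → ℝ) :
    2 * (v ⬝ᵥ w) ≤ v ⬝ᵥ v + w ⬝ᵥ w := by
  simp only [dotProduct, Finset.mul_sum, ← Finset.sum_add_distrib]
  exact Finset.sum_le_sum fun i _ => by nlinarith [sq_nonneg (v i - w i)]

/-- Completing the square in the disturbance `w`: the cross term `2 eᵀ P B w` is absorbed by
`eᵀ P B Bᵀ P e + ‖w‖²`. -/
lemma two_mul_dotProduct_mulVec_le_riccati (M P : Matrix n n ℝ) (B : Matrix n m ℝ)
    (hP : P.IsHermitian) (e : n → ℝ) (w : m → ℝ) :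
    2 * (e ⬝ᵥ P *ᵥ (M *ᵥ e + B *ᵥ w)) ≤
      e ⬝ᵥ (Mᵀ * P + P * M + P * B * Bᵀ * P) *ᵥ e + w ⬝ᵥ w := by
  have hPt : Pᵀ = P := hP
  set v := Bᵀ *ᵥ (P *ᵥ e)
  have hcross : e ⬝ᵥ P *ᵥ (B *ᵥ w) = v ⬝ᵥ w := by
    rw [dotProduct_mulVec, ← mulVec_transpose, hPt, dotProduct_mulVec, ← mulVec_transpose]
  have hquad : e ⬝ᵥ (P * B * Bᵀ * P) *ᵥ e = v ⬝ᵥ v := by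
    rw [← mulVec_mulVec, ← mulVec_mulVec, ← mulVec_mulVec, dotProduct_mulVec, ← mulVec_transpose,
      hPt, dotProduct_mulVec, ← mulVec_transpose]
  have hsymm : e ⬝ᵥ (Mᵀ * P) *ᵥ e = e ⬝ᵥ (P * M) *ᵥ e := by
    rw [← mulVec_mulVec, ← mulVec_mulVec, dotProduct_transpose_mulVec]
    conv_rhs => rw [← hPt, dotProduct_transpose_mulVec, dotProduct_comm]
  have hsplit : e ⬝ᵥ P *ᵥ (M *ᵥ e + B *ᵥ w) = e ⬝ᵥ (P * M) *ᵥ e + v ⬝ᵥ w := by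
    rw [mulVec_add, dotProduct_add, hcross, mulVec_mulVec]
  simp only [add_mulVec, dotProduct_add, hsplit, hquad, hsymm]
  linarith [two_mul_dotProduct_le_dotProduct_self_add v w]

end Riccati

theorem stmt5_general (n m : ℕ)
    (M S P : Matrix (Fin n) (Fin n) ℝ) (B : Matrix (Fin n) (Fin m) ℝ)
    (hP : P.PosDef)
    (hARI : (-(Mᵀ * P + P * M + P * B * Bᵀ * P + S)).PosDef) :
    ∀ e : EuclideanSpace ℝ (Fin n), e ≠ 0 →
      ∀ w : EuclideanSpace ℝ (Fin m), ‖w‖ ^ 2 ≤ e ⬝ᵥ S.mulVec e →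
        2 * (e ⬝ᵥ P.mulVec (M.mulVec e + B.mulVec w)) < 0 := by
  intro e he w hw
  have hdecay := hARI.dotProduct_mulVec_pos (WithLp.ofLp_injective 2 |>.ne he)
  have hnorm_sq : w ⬝ᵥ w = ‖w‖ ^ 2 := by
    rw [← real_inner_self_eq_norm_sq, EuclideanSpace.inner_eq_star_dotProduct, star_trivial]
  have hbound := two_mul_dotProduct_mulVec_le_riccati M P B hP.isHermitian e w
  simp only [star_trivial, neg_mulVec, dotProduct_neg, add_mulVec, dotProduct_add] at hdecay hbound
  linarith

theorem stmt5 (n m : ℕ)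
    (M S P : Matrix (Fin n) (Fin n) ℝ) (B : Matrix (Fin n) (Fin m) ℝ)
    (hS : S.PosSemidef) (hP : P.PosDef)
    (hARI : (-(Mᵀ * P + P * M + P * B * Bᵀ * P + S)).PosDef) :
    ∀ e : EuclideanSpace ℝ (Fin n), e ≠ 0 →
      ∀ w : EuclideanSpace ℝ (Fin m), ‖w‖ ^ 2 ≤ e ⬝ᵥ S.mulVec e →
        2 * (e ⬝ᵥ P.mulVec (M.mulVec e + B.mulVec w)) < 0 :=
  stmt5_general n m M S P B hP hARI
end

section
/- Let M, B, S, P be as in the algebraic Riccati inequality Mᵀ P + P M + P B Bᵀ P + S ≺ 0 with P symmetric positive definite and S symmetric positive semidefinite. Then there exists α > 0 such that for all e ∈ ℝⁿ and all w ∈ ℝ^m with ‖w‖² ≤ eᵀ S e, one has 2 eᵀ P (M e + B w) ≤ −α eᵀ P e. -/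
/-! With `R = Mᵀ P + P M + P B Bᵀ P + S` and `P` symmetric, `eᵀ R e = 2 eᵀ P M e + ‖Bᵀ P e‖² + eᵀ S e`.
By AM–GM the cross term satisfies `2 (Bᵀ P e) ⬝ w ≤ ‖Bᵀ P e‖² + ‖w‖² ≤ ‖Bᵀ P e‖² + eᵀ S e`, so
`2 eᵀ P (M e + B w) ≤ eᵀ R e`. Finally, both `eᵀ (-R) e` and `eᵀ P e` are continuous and
2-homogeneous, so comparing their extrema on the unit sphere with `‖e‖²` gives `α > 0` with
`α eᵀ P e ≤ eᵀ (-R) e`. -/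

open Matrix

section HomogeneousQuadratic

variable {E : Type*} [NormedAddCommGroup E] [NormedSpace ℝ E] {Q : E → ℝ}

lemma eq_norm_sq_mul_inv_norm_smul (hQ : ∀ (t : ℝ) (x : E), Q (t • x) = t ^ 2 * Q x) (x : E) :
    Q x = ‖x‖ ^ 2 * Q (‖x‖⁻¹ • x) := by
  rcases eq_or_ne x 0 with rfl | hx
  · simpa using hQ 0 0
  · rw [← hQ, smul_smul, mul_inv_cancel₀ (norm_ne_zero_iff.mpr hx), one_smul]

lemma exists_pos_mul_norm_sq_le [FiniteDimensional ℝ E] (hQc : Continuous Q)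
    (hQ : ∀ (t : ℝ) (x : E), Q (t • x) = t ^ 2 * Q x) (hpos : ∀ x ≠ 0, 0 < Q x) :
    ∃ c > 0, ∀ x, c * ‖x‖ ^ 2 ≤ Q x := by
  cases subsingleton_or_nontrivial E
  · exact ⟨1, one_pos, fun x => by simpa [Subsingleton.elim x 0] using (hQ 0 0).symm.le⟩
  obtain ⟨x₀, hx₀, hmin⟩ := (isCompact_sphere (0 : E) 1).exists_isMinOn
    (NormedSpace.sphere_nonempty.mpr zero_le_one) hQc.continuousOn
  refine ⟨Q x₀, hpos x₀ (ne_zero_of_mem_unit_sphere ⟨x₀, hx₀⟩), fun x => ?_⟩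
  rcases eq_or_ne x 0 with rfl | hx
  · simpa using (hQ 0 0).symm.le
  rw [eq_norm_sq_mul_inv_norm_smul hQ x, mul_comm]
  exact mul_le_mul_of_nonneg_left (hmin (mem_sphere_zero_iff_norm.mpr (norm_smul_inv_norm hx)))
    (sq_nonneg _)

lemma exists_le_mul_norm_sq [FiniteDimensional ℝ E] (hQc : Continuous Q)
    (hQ : ∀ (t : ℝ) (x : E), Q (t • x) = t ^ 2 * Q x) :
    ∃ C > 0, ∀ x, Q x ≤ C * ‖x‖ ^ 2 := by
  obtain ⟨C, hC⟩ := (isCompact_sphere (0 : E) 1).exists_bound_of_continuousOn hQc.continuousOn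
  refine ⟨max C 1, by positivity, fun x => ?_⟩
  rcases eq_or_ne x 0 with rfl | hx
  · simpa using (hQ 0 0).le
  rw [eq_norm_sq_mul_inv_norm_smul hQ x, mul_comm]
  refine mul_le_mul_of_nonneg_right ?_ (sq_nonneg _)
  calc Q (‖x‖⁻¹ • x) ≤ ‖Q (‖x‖⁻¹ • x)‖ := le_abs_self _
    _ ≤ C := hC _ (mem_sphere_zero_iff_norm.mpr (norm_smul_inv_norm hx))
    _ ≤ max C 1 := le_max_left _ _

end HomogeneousQuadratic

section QuadraticForm

variable {n m : Type*} [Fintype n] [Fintype m]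

lemma continuous_dotProduct_mulVec_self (N : Matrix n n ℝ) :
    Continuous fun e : n → ℝ => e ⬝ᵥ N *ᵥ e := by
  simp only [dotProduct, mulVec]
  fun_prop

lemma smul_dotProduct_mulVec_smul (N : Matrix n n ℝ) (t : ℝ) (e : n → ℝ) :
    (t • e) ⬝ᵥ N *ᵥ (t • e) = t ^ 2 * (e ⬝ᵥ N *ᵥ e) := by
  rw [mulVec_smul, dotProduct_smul, smul_dotProduct, smul_eq_mul, smul_eq_mul]
  ring

lemma Matrix.PosDef.exists_pos_mul_dotProduct_mulVec_le {N : Matrix n n ℝ} (hN : N.PosDef)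
    (P : Matrix n n ℝ) : ∃ α > 0, ∀ e : n → ℝ, α * (e ⬝ᵥ P *ᵥ e) ≤ e ⬝ᵥ N *ᵥ e := by
  obtain ⟨c, hc, hcN⟩ := exists_pos_mul_norm_sq_le (continuous_dotProduct_mulVec_self N)
    (smul_dotProduct_mulVec_smul N) fun e he => by simpa using hN.dotProduct_mulVec_pos he
  obtain ⟨C, hC, hCP⟩ := exists_le_mul_norm_sq (continuous_dotProduct_mulVec_self P)
    (smul_dotProduct_mulVec_smul P)
  refine ⟨c / C, div_pos hc hC, fun e => ?_⟩
  calc c / C * (e ⬝ᵥ P *ᵥ e) ≤ c / C * (C * ‖e‖ ^ 2) := by gcongr; exact hCP e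
    _ = c * ‖e‖ ^ 2 := by field_simp
    _ ≤ e ⬝ᵥ N *ᵥ e := hcN e

lemma two_mul_dotProduct_le (v w : n → ℝ) : 2 * (v ⬝ᵥ w) ≤ v ⬝ᵥ v + w ⬝ᵥ w := by
  have := dotProduct_star_self_nonneg (v - w)
  simp only [star_trivial, sub_dotProduct, dotProduct_sub, dotProduct_comm w v] at this
  linarith

variable {P : Matrix n n ℝ}

lemma dotProduct_mulVec_mulVec_of_transpose_eq (hP : Pᵀ = P) (B : Matrix n m ℝ) (e : n → ℝ)
    (w : m → ℝ) : e ⬝ᵥ P *ᵥ B *ᵥ w = (Bᵀ *ᵥ P *ᵥ e) ⬝ᵥ w := by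
  rw [dotProduct_mulVec, dotProduct_mulVec, vecMul_vecMul, ← mulVec_transpose, transpose_mul, hP,
    mulVec_mulVec]

lemma dotProduct_riccati_mulVec (hP : Pᵀ = P) (M S : Matrix n n ℝ) (B : Matrix n m ℝ)
    (e : n → ℝ) :
    e ⬝ᵥ (Mᵀ * P + P * M + P * B * Bᵀ * P + S) *ᵥ e =
      2 * (e ⬝ᵥ P *ᵥ M *ᵥ e) + (Bᵀ *ᵥ P *ᵥ e) ⬝ᵥ (Bᵀ *ᵥ P *ᵥ e) + e ⬝ᵥ S *ᵥ e := by
  have hPBBP : P * B * Bᵀ * P = P * (B * (Bᵀ * P)) := by simp only [Matrix.mul_assoc]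
  simp only [add_mulVec, hPBBP, ← mulVec_mulVec, dotProduct_add,
    dotProduct_mulVec_mulVec_of_transpose_eq hP, dotProduct_comm e (Mᵀ *ᵥ P *ᵥ e)]
  ring

end QuadraticForm

theorem stmt17_general (n m : ℕ)
    (M S P : Matrix (Fin n) (Fin n) ℝ) (B : Matrix (Fin n) (Fin m) ℝ)
    (hP : P.PosDef)
    (hARI : (-(Mᵀ * P + P * M + P * B * Bᵀ * P + S)).PosDef) :
    ∃ α : ℝ, 0 < α ∧
      ∀ (e : EuclideanSpace ℝ (Fin n)) (w : EuclideanSpace ℝ (Fin m)),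
        ‖w‖ ^ 2 ≤ e ⬝ᵥ S.mulVec e →
          2 * (e ⬝ᵥ P.mulVec (M.mulVec e + B.mulVec w)) ≤ -α * (e ⬝ᵥ P.mulVec e) := by
  have hPt : Pᵀ = P := by simpa using hP.1.eq
  obtain ⟨α, hα, hαN⟩ := hARI.exists_pos_mul_dotProduct_mulVec_le P
  refine ⟨α, hα, fun e w hw => ?_⟩
  have hN := hαN e
  have hww : ‖w‖ ^ 2 = w ⬝ᵥ w := by
    rw [← real_inner_self_eq_norm_sq, EuclideanSpace.inner_eq_star_dotProduct, star_trivial]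
  rw [neg_mulVec, dotProduct_neg, dotProduct_riccati_mulVec hPt] at hN
  rw [mulVec_add, dotProduct_add, dotProduct_mulVec_mulVec_of_transpose_eq hPt B]
  linarith [two_mul_dotProduct_le (Bᵀ *ᵥ P *ᵥ e) w]

theorem stmt17 (n m : ℕ)
    (M S P : Matrix (Fin n) (Fin n) ℝ) (B : Matrix (Fin n) (Fin m) ℝ)
    (hS : S.PosSemidef) (hP : P.PosDef)
    (hARI : (-(Mᵀ * P + P * M + P * B * Bᵀ * P + S)).PosDef) :
    ∃ α : ℝ, 0 < α ∧
      ∀ (e : EuclideanSpace ℝ (Fin n)) (w : EuclideanSpace ℝ (Fin m)),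
        ‖w‖ ^ 2 ≤ e ⬝ᵥ S.mulVec e →
          2 * (e ⬝ᵥ P.mulVec (M.mulVec e + B.mulVec w)) ≤ -α * (e ⬝ᵥ P.mulVec e) :=
  stmt17_general n m M S P B hP hARI
end
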